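/- arXiv:2010.15325 — 2 statements merged into one kernel-verified Lean document; each statement's English description precedes it below -/
import Mathlib

section
/- For every integer k ≥ 1, one has Σ_{μ=1}^{k} (−1)^{μ+1} · binom(2k−μ, μ) · C_{k−μ} = C_k, where C_j = (1/(j+1))·binom(2j, j) denotes the j-th Catalan number. Equivalently, the sequence defined recursively by 𝒞₀ = 1 and 𝒞_k = −Σ_{μ=1}^{k} (−1)^μ · ((2k−μ)!/(μ!·(2k−2μ)!)) · 𝒞_{k−μ} satisfies 𝒞_k = C_k for all k ≥ 0. -/
/-- The `k`-th Catalan number `C_k = binom(2k, k)/(k + 1)`. -/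
noncomputable def Ck (k : ℕ) : ℚ := (Nat.choose (2 * k) k : ℚ) / (k + 1)

/-- Telescoping certificate for the Catalan recursion. -/
noncomputable def gcert (k μ : ℕ) : ℚ :=
  (-1 : ℚ) ^ μ * (Nat.choose (2 * k - μ) μ : ℚ) * (Nat.choose (2 * k - 2 * μ) (k - μ) : ℚ)
    * ((k - μ : ℕ) : ℚ) / ((k : ℚ) * (k + 1))

lemma key (j m : ℕ) :
    ((2 * j + m + 1).choose (m + 1) : ℚ) * ((2 * j).choose j : ℚ)
      * ((m + 1) * (2 * j + m + 2)) =
    ((2 * j + m + 2).choose m : ℚ) * ((2 * j + 2).choose (j + 1) : ℚ) * ((j + 1) ^ 2) := by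
  rw [Nat.cast_choose ℚ (by omega : m + 1 ≤ 2 * j + m + 1),
      Nat.cast_choose ℚ (by omega : j ≤ 2 * j),
      Nat.cast_choose ℚ (by omega : m ≤ 2 * j + m + 2),
      Nat.cast_choose ℚ (by omega : j + 1 ≤ 2 * j + 2)]
  have e1 : 2 * j + m + 1 - (m + 1) = 2 * j := by omega
  have e2 : 2 * j - j = j := by omega
  have e3 : 2 * j + m + 2 - m = 2 * j + 2 := by omega
  have e4 : 2 * j + 2 - (j + 1) = j + 1 := by omega
  rw [e1, e2, e3, e4]
  have f1 : (Nat.factorial (2 * j + m + 2) : ℚ) = (2 * j + m + 2) * Nat.factorial (2 * j + m + 1) := by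
    rw [show 2 * j + m + 2 = (2 * j + m + 1) + 1 from rfl, Nat.factorial_succ]; push_cast; ring
  have f2 : (Nat.factorial (m + 1) : ℚ) = (m + 1) * Nat.factorial m := by rw [Nat.factorial_succ]; push_cast; ring
  have f3 : (Nat.factorial (2 * j + 2) : ℚ) = (2 * j + 2) * (2 * j + 1) * Nat.factorial (2 * j) := by
    rw [show 2 * j + 2 = (2 * j + 1) + 1 from rfl, Nat.factorial_succ, Nat.factorial_succ]
    push_cast; ring
  have f4 : (Nat.factorial (j + 1) : ℚ) = (j + 1) * Nat.factorial j := by rw [Nat.factorial_succ]; push_cast; ring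
  rw [f1, f2, f3, f4]
  have h1 : (Nat.factorial (2 * j + m + 1) : ℚ) ≠ 0 := by positivity
  have h2 : (Nat.factorial (2 * j) : ℚ) ≠ 0 := by positivity
  have h3 : (Nat.factorial m : ℚ) ≠ 0 := by positivity
  have h4 : (Nat.factorial j : ℚ) ≠ 0 := by positivity
  have h5 : ((j : ℚ) + 1) ≠ 0 := by positivity
  have h6 : ((m : ℚ) + 1) ≠ 0 := by positivity
  have h7 : (2 * (j : ℚ) + 1) ≠ 0 := by positivity
  have h8 : (2 * (j : ℚ) + 2) ≠ 0 := by positivity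
  field_simp

lemma step (k μ : ℕ) (h1 : 1 ≤ μ) (h2 : μ ≤ k) :
    (-1 : ℚ) ^ (μ + 1) * (Nat.choose (2 * k - μ) μ : ℚ) * Ck (k - μ) =
      gcert k (μ - 1) - gcert k μ := by
  obtain ⟨m, rfl⟩ : ∃ m, μ = m + 1 := ⟨μ - 1, by omega⟩
  obtain ⟨j, rfl⟩ : ∃ j, k = j + m + 1 := ⟨k - (m + 1), by omega⟩
  unfold gcert Ck
  have e1 : 2 * (j + m + 1) - (m + 1) = 2 * j + m + 1 := by omega
  have e2 : j + m + 1 - (m + 1) = j := by omega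
  have e3 : m + 1 - 1 = m := by omega
  have e4 : 2 * (j + m + 1) - m = 2 * j + m + 2 := by omega
  have e5 : 2 * (j + m + 1) - 2 * m = 2 * j + 2 := by omega
  have e6 : j + m + 1 - m = j + 1 := by omega
  have e7 : 2 * (j + m + 1) - 2 * (m + 1) = 2 * j := by omega
  rw [e1, e2, e3, e4, e5, e6, e7]
  have e8 : 2 * j = 2 * j := rfl
  have hK : ((j : ℚ) + m + 1) ≠ 0 := by positivity
  have hK1 : ((j : ℚ) + m + 1 + 1) ≠ 0 := by positivity
  have hj1 : ((j : ℚ) + 1) ≠ 0 := by positivity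
  have key' := key j m
  push_cast
  push_cast at key'
  field_simp
  linear_combination ((-1 : ℚ)) ^ m * key'

/-- Lemma 3.3: for `k ≥ 1`, `Σ_{μ=1}^{k} (-1)^{μ+1} binom(2k-μ, μ) C_{k-μ} = C_k`. -/
theorem catalan_recursion (k : ℕ) (hk : 1 ≤ k) :
    ∑ μ ∈ Finset.Icc 1 k, (-1 : ℚ) ^ (μ + 1) * (Nat.choose (2 * k - μ) μ : ℚ) * Ck (k - μ) =
      Ck k := by
  have hsum : ∑ μ ∈ Finset.Icc 1 k,
      (-1 : ℚ) ^ (μ + 1) * (Nat.choose (2 * k - μ) μ : ℚ) * Ck (k - μ)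
      = ∑ μ ∈ Finset.Icc 1 k, (gcert k (μ - 1) - gcert k μ) := by
    apply Finset.sum_congr rfl
    intro μ hμ
    rw [Finset.mem_Icc] at hμ
    exact step k μ hμ.1 hμ.2
  rw [hsum]
  rw [show Finset.Icc 1 k = Finset.Ico 1 (k+1) by rw [Finset.Ico_add_one_right_eq_Icc],
     Finset.sum_Ico_eq_sum_range]
  have : ∀ i ∈ Finset.range (k + 1 - 1), gcert k (1 + i - 1) - gcert k (1 + i)
      = gcert k i - gcert k (i + 1) := by
    intro i _
    congr 1
    · congr 1; omega
    · congr 1; omega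
  rw [Finset.sum_congr rfl this, Finset.sum_range_sub' (fun i => gcert k i)]
  have hgk : gcert k k = 0 := by
    unfold gcert
    rw [Nat.sub_self]
    simp
  have hg0 : gcert k 0 = Ck k := by
    unfold gcert Ck
    simp only [Nat.sub_zero, pow_zero, mul_zero, Nat.choose_zero_right]
    have hk' : (k : ℚ) ≠ 0 := by
      exact_mod_cast Nat.cast_ne_zero.mpr (by omega)
    have : (k : ℚ) * ((k : ℚ) + 1) ≠ 0 := by positivity
    field_simp
    ring
  rw [show k + 1 - 1 = k from rfl, hgk, hg0, sub_zero]
end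

section
/- Let k ∈ ℕ₀. For every ε > 0 there exists a constant C > 0 (depending only on k and ε) such that for every prime p > 3, every m ∈ ℤ, every M ∈ ℕ and every r ∈ ℕ: |E_{2k,m,M}(p^r) − (1/3)·2^{2k−2}·p^{rk+1}·ϱ| ≤ C · p^{rk + δ/2 + ε}, where ϱ := #{t ∈ ℤ : t ≡ m (mod M), t² = 4p^r} and δ = 1 if k = 0 and δ = 0 otherwise. -/
open scoped Classical

noncomputable section

namespace HurwitzPaper

/-- Positive definite integral binary quadratic forms `(a, b, c)` of discriminant `-N`. -/
def PDForm (N : ℤ) : Type :=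
  {f : ℤ × ℤ × ℤ // 0 < f.1 ∧ f.2.1 ^ 2 - 4 * f.1 * f.2.2 = -N}

/-- The action of `SL₂(ℤ)` on binary quadratic forms, via `(x, y) ↦ (αx + βy, γx + δy)`. -/
def act (g : Matrix.SpecialLinearGroup (Fin 2) ℤ) (f : ℤ × ℤ × ℤ) : ℤ × ℤ × ℤ :=
  let a := f.1; let b := f.2.1; let c := f.2.2
  let α := (g : Matrix (Fin 2) (Fin 2) ℤ) 0 0
  let β := (g : Matrix (Fin 2) (Fin 2) ℤ) 0 1
  let γ := (g : Matrix (Fin 2) (Fin 2) ℤ) 1 0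
  let δ := (g : Matrix (Fin 2) (Fin 2) ℤ) 1 1
  (a * α ^ 2 + b * α * γ + c * γ ^ 2,
    2 * a * α * β + b * (α * δ + β * γ) + 2 * c * γ * δ,
    a * β ^ 2 + b * β * δ + c * δ ^ 2)

/-- `SL₂(ℤ)`-equivalence classes of positive definite forms of discriminant `-N`. -/
def FormClass (N : ℤ) : Type :=
  Quot fun f g : PDForm N => ∃ γ, act γ f.1 = g.1

/-- The weight of a class: `1/2` if it contains a multiple of `x² + y²`, `1/3` if it
contains a multiple of `x² + xy + y²`, and `1` otherwise. -/
def clsWeight {N : ℤ} (q : FormClass N) : ℚ :=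
  if ∃ l : ℤ, ∃ γ, act γ q.out.1 = (l, 0, l) then 1 / 2
  else if ∃ l : ℤ, ∃ γ, act γ q.out.1 = (l, l, l) then 1 / 3
  else 1

/-- The Hurwitz class number `H(N)`. -/
def H (N : ℤ) : ℚ :=
  if N = 0 then -(1 / 12)
  else if N < 0 then 0
  else ∑ᶠ q : FormClass N, clsWeight q

/-- The moments `H_{κ,m,M}(n) = Σ_{t ≡ m (mod M)} t^κ H(4n - t²)`. -/
def Hmom (κ : ℕ) (m : ℤ) (M : ℕ) (n : ℕ) : ℚ :=
  ∑ᶠ t : ℤ, if (M : ℤ) ∣ t - m then (t : ℚ) ^ κ * H (4 * n - t ^ 2) else 0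

/-- The `k`-th Catalan number `C_k = binom(2k, k)/(k + 1)`. -/
def Ck (k : ℕ) : ℚ := (Nat.choose (2 * k) k : ℚ) / (k + 1)

/-- `𝓗_{κ,m,M}(p; n) = Σ_{t ≡ m (mod M), p ∤ t} t^κ H(4n - t²)`. -/
def Hscr (κ : ℕ) (m : ℤ) (M : ℕ) (p : ℕ) (n : ℕ) : ℚ :=
  ∑ᶠ t : ℤ, if (M : ℤ) ∣ t - m ∧ ¬(p : ℤ) ∣ t then (t : ℚ) ^ κ * H (4 * n - t ^ 2) else 0

/-- The boundary term `E_{κ,m,M}(p^r)`. -/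
def Eterm (κ : ℕ) (m : ℤ) (M : ℕ) (p : ℕ) [Fact p.Prime] (r : ℕ) : ℚ :=
  (if (M : ℤ) ∣ m ∧ κ = 0 ∧ Odd r then H (4 * p) else 0)
    + (if (M : ℤ) ∣ m ∧ κ = 0 ∧ Even r then (1 / 2 : ℚ) * (1 - (legendreSym p (-1) : ℚ))
        else 0)
    + (1 / 3 : ℚ) * (1 - (legendreSym p (-3) : ℚ)) *
        (∑ᶠ t : ℤ, if (M : ℤ) ∣ t - m ∧ t ^ 2 = (p : ℤ) ^ r then (t : ℚ) ^ κ else 0)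
    + ((p : ℚ) - 1) / 12 *
        (∑ᶠ t : ℤ, if (M : ℤ) ∣ t - m ∧ t ^ 2 = 4 * (p : ℤ) ^ r then (t : ℚ) ^ κ else 0)

/-!
For `k = 0` the first summand of `E_{2k,m,M}(p^r)` is at most `H(4p)`, and this is where the
extra `p^{1/2}` comes from: every class of forms of discriminant `-N` contains a reduced form
`|b| ≤ a ≤ c`, so `b² ≤ N` and `a ∣ b² + N` determines `c`; hence `H(N)` is at most
`(2√N + 1) · max_{n ≤ 2N} d(n) ≪_ε N^{1/2+ε}` by the divisor bound.

In the two sums over `t` with `t² = d` every summand `t^{2k}` equals `d^k` and there are at most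
two such `t`. So the third summand is `O(p^{rk})`, and the last one equals
`(p - 1)/12 · 4^k p^{rk} ϱ`, whose `p/12`-part is exactly the main term.
-/

open Finset ModularGroup

lemma natCast_add_one_le_mul_pow {a : ℝ} (ha : 1 < a) (e : ℕ) :
    (e + 1 : ℝ) ≤ a / (a - 1) * a ^ e := by
  have hbern : 1 + e * (a - 1) ≤ a ^ e := by
    simpa using one_add_mul_le_pow (a := a - 1) (by linarith) e
  have hae : 1 ≤ a ^ e := one_le_pow₀ ha.le
  rw [div_mul_eq_mul_div, le_div_iff₀ (by linarith)]
  nlinarith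

theorem _root_.Nat.card_divisors_le_mul_rpow {ε : ℝ} (hε : 0 < ε) :
    ∃ C : ℝ, ∀ n : ℕ, n ≠ 0 → (#n.divisors : ℝ) ≤ C * (n : ℝ) ^ ε := by
  set a : ℝ := 2 ^ ε
  have ha : 1 < a := Real.one_lt_rpow (by norm_num) hε
  set C₀ := a / (a - 1)
  have hC₀ : 1 ≤ C₀ := by rw [le_div_iff₀ (by linarith)]; linarith
  set K := ⌈(2 : ℝ) ^ ε⁻¹⌉₊
  -- a prime `q < K` costs a factor `C₀`, while a prime `q ≥ K` has `q ^ ε ≥ 2` and costs nothing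
  have hfactor (q e : ℕ) (hq : q.Prime) :
      (e + 1 : ℝ) ≤ (if q < K then C₀ else 1) * ((q : ℝ) ^ ε) ^ e := by
    have hq2 : (2 : ℝ) ≤ q := by exact_mod_cast hq.two_le
    split_ifs with hqK
    · calc (e + 1 : ℝ) ≤ C₀ * a ^ e := natCast_add_one_le_mul_pow ha e
        _ ≤ C₀ * ((q : ℝ) ^ ε) ^ e := by gcongr; exact Real.rpow_le_rpow (by norm_num) hq2 hε.le
    · have hKq : (2 : ℝ) ^ ε⁻¹ ≤ q := (Nat.le_ceil _).trans (by exact_mod_cast not_lt.mp hqK)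
      have h2 : (2 : ℝ) ≤ (q : ℝ) ^ ε := by
        calc (2 : ℝ) = ((2 : ℝ) ^ ε⁻¹) ^ ε := by
              rw [← Real.rpow_mul (by norm_num), inv_mul_cancel₀ hε.ne', Real.rpow_one]
          _ ≤ (q : ℝ) ^ ε := by gcongr
      calc (e + 1 : ℝ) ≤ 2 ^ e := by exact_mod_cast Nat.lt_two_pow_self
        _ ≤ 1 * ((q : ℝ) ^ ε) ^ e := by rw [one_mul]; gcongr
  refine ⟨C₀ ^ K, fun n hn => ?_⟩
  have hn_rpow : (n : ℝ) ^ ε = ∏ q ∈ n.primeFactors, ((q : ℝ) ^ ε) ^ n.factorization q := by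
    conv_lhs =>
      rw [← Nat.prod_factorization_pow_eq_self hn, Nat.prod_factorization_eq_prod_primeFactors]
    push_cast
    rw [← Real.finsetProd_rpow _ _ (fun q _ => by positivity)]
    exact prod_congr rfl fun q _ => (Real.rpow_pow_comm (by positivity) _ _).symm
  have hsmall : ∏ q ∈ n.primeFactors, (if q < K then C₀ else 1) ≤ C₀ ^ K := by
    rw [prod_ite, prod_const, prod_const, one_pow, mul_one]
    refine pow_le_pow_right₀ hC₀ ((card_le_card fun q hq => ?_).trans (card_range K).le)
    exact mem_range.mpr (mem_filter.mp hq).2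
  calc (#n.divisors : ℝ) = ∏ q ∈ n.primeFactors, ((n.factorization q : ℝ) + 1) := by
        rw [Nat.card_divisors hn]; push_cast; rfl
    _ ≤ ∏ q ∈ n.primeFactors, (if q < K then C₀ else 1) * ((q : ℝ) ^ ε) ^ n.factorization q :=
        prod_le_prod (fun q _ => by positivity) fun q hq =>
          hfactor q _ (Nat.prime_of_mem_primeFactors hq)
    _ = (∏ q ∈ n.primeFactors, if q < K then C₀ else 1) * (n : ℝ) ^ ε := by
        rw [prod_mul_distrib, hn_rpow]
    _ ≤ C₀ ^ K * (n : ℝ) ^ ε := by gcongr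

lemma act_act (g h : Matrix.SpecialLinearGroup (Fin 2) ℤ) (f : ℤ × ℤ × ℤ) :
    act h (act g f) = act (g * h) f := by
  obtain ⟨a, b, c⟩ := f
  simp only [act, Matrix.SpecialLinearGroup.coe_mul, Matrix.mul_apply, Fin.sum_univ_two]
  refine Prod.ext ?_ (Prod.ext ?_ ?_) <;> dsimp only <;> ring

lemma act_T_zpow (n a b c : ℤ) :
    act (T ^ n) (a, b, c) = (a, 2 * a * n + b, a * n ^ 2 + b * n + c) := by
  simp [act, coe_T_zpow]

lemma act_S (a b c : ℤ) : act S (a, b, c) = (c, -b, a) := by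
  simp [act, coe_S]

theorem exists_act_reduced {N : ℤ} (hN : 0 < N) (a b c : ℤ) (ha : 0 < a)
    (hdisc : b ^ 2 - 4 * a * c = -N) :
    ∃ (γ : Matrix.SpecialLinearGroup (Fin 2) ℤ) (a' b' c' : ℤ), act γ (a, b, c) = (a', b', c') ∧
      0 < a' ∧ |b'| ≤ a' ∧ a' ≤ c' ∧ b' ^ 2 - 4 * a' * c' = -N := by
  obtain ⟨n, s, hns, hs_nonneg, hs_lt⟩ : ∃ n s : ℤ, s + 2 * a * n = a - b ∧ 0 ≤ s ∧ s < 2 * a :=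
    ⟨(a - b) / (2 * a), (a - b) % (2 * a), Int.emod_add_mul_ediv _ _,
      Int.emod_nonneg _ (by omega), Int.emod_lt_of_pos _ (by omega)⟩
  set b' := 2 * a * n + b
  set c' := a * n ^ 2 + b * n + c
  have hb' : |b'| ≤ a := abs_le.mpr ⟨by omega, by omega⟩
  have hdisc' : b' ^ 2 - 4 * a * c' = -N := by linear_combination hdisc
  have hc' : 0 < c' := by nlinarith
  rcases le_or_gt a c' with hac | hca
  · exact ⟨T ^ n, a, b', c', act_T_zpow n a b c, ha, hb', hac, hdisc'⟩
  · obtain ⟨γ, a'', b'', c'', hγ, hreduced⟩ :=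
      exists_act_reduced hN c' (-b') a hc' (by linear_combination hdisc')
    refine ⟨T ^ n * S * γ, a'', b'', c'', ?_, hreduced⟩
    rw [← act_act, ← act_act, act_T_zpow, act_S, hγ]
termination_by a.toNat
decreasing_by omega

def reducedCandidates (N : ℕ) : Finset (ℤ × ℤ × ℤ) :=
  (Icc (-(N.sqrt : ℤ)) N.sqrt).biUnion fun b =>
    (b ^ 2 + N).toNat.divisors.image fun a : ℕ => ((a : ℤ), b, (b ^ 2 + N) / (4 * a))

lemma mem_reducedCandidates {N : ℕ} {a b c : ℤ} (ha : 0 < a) (hba : |b| ≤ a) (hac : a ≤ c)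
    (hdisc : b ^ 2 - 4 * a * c = -N) : (a, b, c) ∈ reducedCandidates N := by
  have hkey : b ^ 2 + N = 4 * a * c := by linarith
  have hbN : b.natAbs ^ 2 ≤ N := by
    have : b ^ 2 ≤ a * c := by nlinarith [sq_abs b, abs_nonneg b]
    zify; rw [sq_abs]; nlinarith
  have hb : |b| ≤ N.sqrt := by
    rw [Int.abs_eq_natAbs]; exact_mod_cast Nat.le_sqrt'.mpr hbN
  refine mem_biUnion.mpr ⟨b, mem_Icc.mpr (abs_le.mp hb), mem_image.mpr ⟨a.toNat, ?_, ?_⟩⟩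
  · have hpos : 0 < b ^ 2 + N := by rw [hkey]; nlinarith
    rw [Nat.mem_divisors]
    refine ⟨?_, by omega⟩
    rw [← Int.natCast_dvd_natCast, Int.toNat_of_nonneg ha.le, Int.toNat_of_nonneg hpos.le]
    exact ⟨4 * c, by linarith⟩
  · rw [Int.toNat_of_nonneg ha.le, hkey, Int.mul_ediv_cancel_left _ (by omega)]

lemma card_reducedCandidates_le {N : ℕ} (hN : N ≠ 0) {C ε : ℝ} (hε : 0 ≤ ε)
    (hC : ∀ n : ℕ, n ≠ 0 → (#n.divisors : ℝ) ≤ C * (n : ℝ) ^ ε) :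
    (#(reducedCandidates N) : ℝ) ≤ 3 * 2 ^ ε * C * (N : ℝ) ^ (1 / 2 + ε) := by
  have hC0 : 0 ≤ C := by simpa using (hC 1 one_ne_zero).trans' (by simp)
  have hdiv (b : ℤ) (hb : b ∈ Icc (-(N.sqrt : ℤ)) N.sqrt) :
      (#(b ^ 2 + N).toNat.divisors : ℝ) ≤ C * (2 * N : ℝ) ^ ε := by
    have hbN : b ^ 2 ≤ N := by
      have := Nat.sqrt_le' N
      have : b ^ 2 ≤ (N.sqrt : ℤ) ^ 2 := sq_le_sq' (mem_Icc.mp hb).1 (mem_Icc.mp hb).2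
      zify at *; linarith
    have hpos : 0 < b ^ 2 + N := by have := sq_nonneg b; omega
    refine (hC _ (by omega)).trans (by gcongr; norm_cast; omega)
  have hIcc : (#(Icc (-(N.sqrt : ℤ)) N.sqrt) : ℝ) ≤ 3 * (N : ℝ) ^ (1 / 2 : ℝ) := by
    rw [Int.card_Icc, ← Real.sqrt_eq_rpow]
    have h1 : (1 : ℝ) ≤ √(N : ℝ) :=
      Real.one_le_sqrt.mpr (by exact_mod_cast Nat.one_le_iff_ne_zero.mpr hN)
    have h2 : (N.sqrt : ℝ) ≤ √(N : ℝ) := Real.nat_sqrt_le_real_sqrt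
    have h3 : ((N.sqrt + 1 - -(N.sqrt : ℤ)).toNat : ℝ) = 2 * N.sqrt + 1 := by
      rw [show (N.sqrt + 1 - -(N.sqrt : ℤ)) = ((2 * N.sqrt + 1 : ℕ) : ℤ) by push_cast; ring,
        Int.toNat_natCast]
      push_cast; ring
    rw [h3]; linarith
  calc (#(reducedCandidates N) : ℝ)
      ≤ ∑ b ∈ Icc (-(N.sqrt : ℤ)) N.sqrt, (#(b ^ 2 + N).toNat.divisors : ℝ) := by
        have hcard : #(reducedCandidates N) ≤
            ∑ b ∈ Icc (-(N.sqrt : ℤ)) N.sqrt, #(b ^ 2 + N).toNat.divisors :=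
          card_biUnion_le.trans (sum_le_sum fun b _ => card_image_le)
        exact_mod_cast hcard
    _ ≤ #(Icc (-(N.sqrt : ℤ)) N.sqrt) * (C * (2 * N : ℝ) ^ ε) := by
        simpa using sum_le_card_nsmul _ _ _ hdiv
    _ ≤ 3 * (N : ℝ) ^ (1 / 2 : ℝ) * (C * (2 * N : ℝ) ^ ε) := by gcongr
    _ = 3 * 2 ^ ε * C * (N : ℝ) ^ (1 / 2 + ε) := by
        rw [Real.mul_rpow (by norm_num) (by positivity), Real.rpow_add (by positivity)]; ring

lemma FormClass.exists_reduced_rep {N : ℤ} (hN : 0 < N) (q : FormClass N) :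
    ∃ f : PDForm N, Quot.mk _ f = q ∧ |f.1.2.1| ≤ f.1.1 ∧ f.1.1 ≤ f.1.2.2 := by
  induction q using Quot.ind with
  | mk f =>
    obtain ⟨⟨a, b, c⟩, ha, hdisc⟩ := f
    obtain ⟨γ, a', b', c', hγ, ha', hb', hc', hdisc'⟩ := exists_act_reduced hN a b c ha hdisc
    exact ⟨⟨(a', b', c'), ha', hdisc'⟩, (Quot.sound ⟨γ, hγ⟩).symm, hb', hc'⟩

lemma clsWeight_nonneg {N : ℤ} (q : FormClass N) : 0 ≤ clsWeight q := by
  unfold clsWeight; split_ifs <;> norm_num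

lemma clsWeight_le_one {N : ℤ} (q : FormClass N) : clsWeight q ≤ 1 := by
  unfold clsWeight; split_ifs <;> norm_num

lemma H_nonneg {N : ℤ} (hN : N ≠ 0) : 0 ≤ H N := by
  rw [H, if_neg hN]
  split_ifs
  · rfl
  · exact finsum_nonneg clsWeight_nonneg

lemma H_le_card {N : ℤ} (hN : 0 < N) (F : Finset (ℤ × ℤ × ℤ))
    (hF : ∀ a b c : ℤ, 0 < a → |b| ≤ a → a ≤ c → b ^ 2 - 4 * a * c = -N → (a, b, c) ∈ F) :
    H N ≤ #F := by
  choose rep hrep hred using FormClass.exists_reduced_rep hN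
  let toF : FormClass N → F := fun q =>
    ⟨(rep q).1, hF _ _ _ (rep q).2.1 (hred q).1 (hred q).2 (rep q).2.2⟩
  have hinj : Function.Injective toF := fun q q' h => by
    have hval : (toF q : ℤ × ℤ × ℤ) = toF q' := congrArg Subtype.val h
    have hrep_eq : rep q = rep q' := Subtype.ext hval
    rw [← hrep q, ← hrep q', hrep_eq]
  have : Finite (FormClass N) := Finite.of_injective toF hinj
  have : Fintype (FormClass N) := Fintype.ofFinite _
  rw [H, if_neg hN.ne', if_neg hN.not_gt, finsum_eq_sum_of_fintype]
  calc ∑ q, clsWeight q ≤ ∑ _q : FormClass N, (1 : ℚ) :=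
        sum_le_sum fun q _ => clsWeight_le_one q
    _ = Nat.card (FormClass N) := by simp [Nat.card_eq_fintype_card]
    _ ≤ #F := by
        exact_mod_cast (Nat.card_le_card_of_injective toF hinj).trans (Nat.card_eq_finsetCard F).le

theorem H_le_mul_rpow {ε : ℝ} (hε : 0 < ε) :
    ∃ C : ℝ, ∀ N : ℕ, N ≠ 0 → (H N : ℝ) ≤ C * (N : ℝ) ^ (1 / 2 + ε) := by
  obtain ⟨C, hC⟩ := Nat.card_divisors_le_mul_rpow hε
  refine ⟨3 * 2 ^ ε * C, fun N hN => ?_⟩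
  have hH : H N ≤ #(reducedCandidates N) :=
    H_le_card (by positivity) _ fun a b c ha hb hc hdisc => mem_reducedCandidates ha hb hc hdisc
  exact (Rat.cast_le.mpr hH).trans (by simpa using card_reducedCandidates_le hN hε.le hC)

lemma finsum_ite_eq_natCard_mul {α R : Type*} [NonAssocSemiring R] {P : α → Prop} [DecidablePred P]
    (hP : {a | P a}.Finite) (c : R) :
    ∑ᶠ a, (if P a then c else 0) = Nat.card {a // P a} * c := by
  have hind : (fun a => if P a then c else 0) = Set.indicator {a | P a} (fun _ => c) := by
    ext a; simp [Set.indicator_apply]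
  rw [hind, ← finsum_mem_def, finsum_mem_eq_finite_toFinset_sum _ hP, sum_const, nsmul_eq_mul,
    ← Set.ncard_eq_toFinset_card _ hP, ← Nat.card_coe_set_eq]
  rfl

lemma eq_sqrt_or_eq_neg_sqrt {t d : ℤ} (ht : t ^ 2 = d) : t = d.sqrt ∨ t = -d.sqrt := by
  rw [← ht, sq, Int.sqrt_eq]
  exact Int.natAbs_eq t

lemma setOf_and_sq_eq_subset (P : ℤ → Prop) (d : ℤ) :
    {t : ℤ | P t ∧ t ^ 2 = d} ⊆ ({d.sqrt, -d.sqrt} : Finset ℤ) := fun t ht => by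
  simpa using eq_sqrt_or_eq_neg_sqrt ht.2

lemma natCard_and_sq_eq_le_two (P : ℤ → Prop) (d : ℤ) :
    Nat.card {t : ℤ // P t ∧ t ^ 2 = d} ≤ 2 := by
  calc Nat.card {t : ℤ // P t ∧ t ^ 2 = d} = {t : ℤ | P t ∧ t ^ 2 = d}.ncard := rfl
    _ ≤ (↑({d.sqrt, -d.sqrt} : Finset ℤ) : Set ℤ).ncard :=
        Set.ncard_le_ncard (setOf_and_sq_eq_subset P d) (Finset.finite_toSet _)
    _ ≤ 2 := by rw [Set.ncard_coe_finset]; exact card_le_two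

lemma finsum_ite_and_sq_eq_pow_two_mul (P : ℤ → Prop) [DecidablePred P] (d : ℤ) (k : ℕ) :
    ∑ᶠ t : ℤ, (if P t ∧ t ^ 2 = d then (t : ℚ) ^ (2 * k) else 0) =
      Nat.card {t : ℤ // P t ∧ t ^ 2 = d} * (d : ℚ) ^ k := by
  rw [← finsum_ite_eq_natCard_mul ((Finset.finite_toSet _).subset (setOf_and_sq_eq_subset P d))]
  refine finsum_congr fun t => ?_
  split_ifs with ht
  · rw [pow_mul, ← ht.2]; push_cast; rfl
  · rfl

lemma abs_legendreSym_le_one (p : ℕ) [Fact p.Prime] (a : ℤ) : |(legendreSym p a : ℝ)| ≤ 1 := by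
  by_cases ha : (a : ZMod p) = 0
  · simp [(legendreSym.eq_zero_iff p a).mpr ha]
  · rcases legendreSym.eq_one_or_neg_one p ha with h | h <;> simp [h]

lemma Eterm_two_mul (k : ℕ) (m : ℤ) (M p : ℕ) [Fact p.Prime] (r : ℕ) :
    Eterm (2 * k) m M p r =
      (if (M : ℤ) ∣ m ∧ k = 0 ∧ Odd r then H (4 * p) else 0)
      + (if (M : ℤ) ∣ m ∧ k = 0 ∧ Even r then (1 / 2 : ℚ) * (1 - (legendreSym p (-1) : ℚ))
          else 0)
      + (1 / 3 : ℚ) * (1 - (legendreSym p (-3) : ℚ)) *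
          (Nat.card {t : ℤ // (M : ℤ) ∣ t - m ∧ t ^ 2 = (p : ℤ) ^ r} * (p : ℚ) ^ (r * k))
      + ((p : ℚ) - 1) / 12 *
          (Nat.card {t : ℤ // (M : ℤ) ∣ t - m ∧ t ^ 2 = 4 * (p : ℤ) ^ r} *
            (4 ^ k * (p : ℚ) ^ (r * k))) := by
  simp only [Eterm, mul_eq_zero, two_ne_zero, false_or, finsum_ite_and_sq_eq_pow_two_mul]
  push_cast
  ring

lemma abs_Eterm_two_mul_sub_le (k : ℕ) (m : ℤ) (M p : ℕ) [Fact p.Prime] (r : ℕ) :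
    |(Eterm (2 * k) m M p r : ℝ) -
        (1 / 3 : ℝ) * (2 : ℝ) ^ (2 * (k : ℤ) - 2) * (p : ℝ) ^ (r * k + 1) *
          (Nat.card {t : ℤ // (M : ℤ) ∣ t - m ∧ t ^ 2 = 4 * (p : ℤ) ^ r} : ℝ)| ≤
      (if k = 0 then (H (4 * p) : ℝ) else 0) + 1 + (4 / 3 + 4 ^ k / 6) * (p : ℝ) ^ (r * k) := by
  have hpow : (2 : ℝ) ^ (2 * (k : ℤ) - 2) = 4 ^ k / 4 := by
    rw [zpow_sub₀ two_ne_zero, zpow_mul, zpow_natCast]; norm_num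
  rw [Eterm_two_mul, hpow, pow_succ]
  simp only [Rat.cast_add, Rat.cast_mul, Rat.cast_sub, Rat.cast_div, Rat.cast_one,
    Rat.cast_natCast, Rat.cast_intCast, Rat.cast_pow, Rat.cast_ofNat]
  set ϱ₁ := Nat.card {t : ℤ // (M : ℤ) ∣ t - m ∧ t ^ 2 = (p : ℤ) ^ r}
  set ϱ := Nat.card {t : ℤ // (M : ℤ) ∣ t - m ∧ t ^ 2 = 4 * (p : ℤ) ^ r}
  set T₁ : ℝ := ((if (M : ℤ) ∣ m ∧ k = 0 ∧ Odd r then H (4 * p) else 0 : ℚ) : ℝ)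
  set T₂ : ℝ := ((if (M : ℤ) ∣ m ∧ k = 0 ∧ Even r then
    1 / 2 * (1 - (legendreSym p (-1) : ℚ)) else 0 : ℚ) : ℝ)
  set L : ℝ := (legendreSym p (-3) : ℝ)
  have hL : |L| ≤ 1 := abs_legendreSym_le_one p (-3)
  have hϱ₁ : (ϱ₁ : ℝ) ≤ 2 := by exact_mod_cast natCard_and_sq_eq_le_two _ _
  have hϱ : (ϱ : ℝ) ≤ 2 := by exact_mod_cast natCard_and_sq_eq_le_two _ _
  have hT₁ : |T₁| ≤ if k = 0 then (H (4 * p) : ℝ) else 0 := by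
    have hp : (p : ℤ) ≠ 0 := by exact_mod_cast (Fact.out : p.Prime).ne_zero
    have hH : (0 : ℝ) ≤ H (4 * p) := by exact_mod_cast H_nonneg (mul_ne_zero four_ne_zero hp)
    unfold T₁; split_ifs <;> simp_all [abs_of_nonneg]
  have hT₂ : |T₂| ≤ 1 := by
    have hL₁ := abs_le.mp (abs_legendreSym_le_one p (-1))
    unfold T₂; split_ifs
    · push_cast; rw [abs_le]; constructor <;> linarith
    · simp
  set P : ℝ := (p : ℝ) ^ (r * k)
  have hP : 0 ≤ P := by positivity
  have hA : |1 / 3 * (1 - L) * (ϱ₁ * P)| ≤ 4 / 3 * P := by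
    have h1L := abs_le.mp hL
    have h := mul_le_mul (show 1 - L ≤ 2 by linarith) hϱ₁ (Nat.cast_nonneg _) (by norm_num)
    rw [abs_le]; constructor <;> nlinarith [mul_nonneg (sub_nonneg.mpr h1L.2) (Nat.cast_nonneg ϱ₁)]
  have hB : |4 ^ k * P * ϱ / 12| ≤ 4 ^ k / 6 * P := by
    rw [abs_of_nonneg (by positivity)]
    have h4 : (0 : ℝ) ≤ 4 ^ k * P := by positivity
    nlinarith
  have hsplit : T₁ + T₂ + 1 / 3 * (1 - L) * (ϱ₁ * P) + (p - 1) / 12 * (ϱ * (4 ^ k * P)) -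
      1 / 3 * (4 ^ k / 4) * (P * p) * ϱ =
        T₁ + T₂ + 1 / 3 * (1 - L) * (ϱ₁ * P) - 4 ^ k * P * ϱ / 12 := by
    ring
  rw [hsplit, abs_le]
  constructor <;> linarith [abs_le.mp hT₁, abs_le.mp hT₂, abs_le.mp hA, abs_le.mp hB]

/-- Lemma 4.2: `E_{2k,m,M}(p^r) = (1/3) 2^{2k-2} p^{rk+1} ϱ_{m,M}(p^r) + O_{k,ε}(p^{rk+δ_{k=0}/2+ε})`. -/
theorem Eterm_asymptotic (k : ℕ) (ε : ℝ) (hε : 0 < ε) :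
    ∃ C : ℝ, 0 < C ∧ ∀ (p : ℕ) (hp : p.Prime), 3 < p → ∀ (m : ℤ) (M : ℕ), 0 < M →
      ∀ r : ℕ, 0 < r →
        letI : Fact p.Prime := ⟨hp⟩
        |(Eterm (2 * k) m M p r : ℝ) -
            (1 / 3 : ℝ) * (2 : ℝ) ^ (2 * (k : ℤ) - 2) * (p : ℝ) ^ (r * k + 1) *
              (Nat.card {t : ℤ // (M : ℤ) ∣ t - m ∧ t ^ 2 = 4 * (p : ℤ) ^ r} : ℝ)| ≤
          C * (p : ℝ) ^ ((r * k : ℝ) + (if k = 0 then (1 : ℝ) else 0) / 2 + ε) := by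
  obtain ⟨CH, hCH⟩ := H_le_mul_rpow hε
  refine ⟨|CH| * 4 ^ (1 / 2 + ε) + 7 / 3 + 4 ^ k / 6, by positivity, ?_⟩
  intro p hp _ m M _ r _
  have : Fact p.Prime := ⟨hp⟩
  set X := (p : ℝ) ^ ((r * k : ℝ) + (if k = 0 then (1 : ℝ) else 0) / 2 + ε)
  have hp1 : (1 : ℝ) ≤ p := by exact_mod_cast hp.one_lt.le
  have hX : 1 ≤ X := Real.one_le_rpow hp1 (by positivity)
  have hpX : (p : ℝ) ^ (r * k) ≤ X := by
    rw [← Real.rpow_natCast]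
    exact Real.rpow_le_rpow_of_exponent_le hp1 (by push_cast; split_ifs <;> linarith)
  have hHX : (if k = 0 then (H (4 * p) : ℝ) else 0) ≤ |CH| * 4 ^ (1 / 2 + ε) * X := by
    split_ifs with hk
    · calc (H (4 * p) : ℝ) ≤ CH * ((4 * p : ℕ) : ℝ) ^ (1 / 2 + ε) := by
            exact_mod_cast hCH (4 * p) (by positivity)
        _ ≤ |CH| * ((4 * p : ℕ) : ℝ) ^ (1 / 2 + ε) := by gcongr; exact le_abs_self CH
        _ = |CH| * 4 ^ (1 / 2 + ε) * X := by
            simp only [X, hk]; push_cast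
            rw [Real.mul_rpow (by norm_num) (by positivity)]; norm_num; ring
    · positivity
  calc _ ≤ _ := abs_Eterm_two_mul_sub_le k m M p r
    _ ≤ _ := by
        have := mul_le_mul_of_nonneg_left hpX (by positivity : (0 : ℝ) ≤ 4 / 3 + 4 ^ k / 6)
        linarith

end HurwitzPaper
end
end
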